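/- arXiv:1311.6741 — 8 statements merged into one kernel-verified Lean document; each statement's English description precedes it below -/
import Mathlib

section
/- Every eigenvalue λ of the pencil H_{N;c} - λD_{m,n} satisfies |λ| < 2 + |c|. -/
open Matrix

noncomputable def Hmat (N : ℕ) (c : ℂ) : Matrix (Fin N) (Fin N) ℂ :=
  fun i j => if (i : ℕ) = (j : ℕ) then c
    else if (i : ℕ) + 1 = (j : ℕ) ∨ (j : ℕ) + 1 = (i : ℕ) then 1 else 0

noncomputable def Dmat (m n : ℕ) : Matrix (Fin (m + n)) (Fin (m + n)) ℂ :=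
  Matrix.diagonal (fun i => if (i : ℕ) < m then 1 else -1)

/-!
Suppose `‖λ‖ ≥ 2 + |c|` and `(H - λD) x = 0`. Padding `x` with zeros at both ends, the rows say
`y (k-1) + a k * y k + y (k+1) = 0` with `‖a k‖ = ‖c ∓ λ‖ ≥ 2`, so `u k = ‖y k‖` is discretely
convex: `2 u k ≤ u (k-1) + u (k+1)`. Being nonnegative with `u 0 = 0`, it is nondecreasing at the
start, so convexity keeps it nondecreasing up to `u (N+1) = 0`; hence `u = 0` and `x = 0`.
-/

lemma le_of_two_mul_le_add {u : ℕ → ℝ} {N : ℕ} (h01 : u 0 ≤ u 1)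
    (hconv : ∀ k < N, 2 * u (k + 1) ≤ u k + u (k + 2)) {k : ℕ} (hk : k ≤ N + 1) :
    u k ≤ u (N + 1) := by
  have step : ∀ j ≤ N, u j ≤ u (j + 1) := by
    intro j hj
    induction j with
    | zero => exact h01
    | succ j ih => linarith [ih (by omega), hconv j (by omega)]
  exact Nat.decreasingInduction (motive := fun k _ => u k ≤ u (N + 1))
    (fun j hj ih => (step j (by omega)).trans ih) le_rfl hk

theorem eq_zero_of_three_term_recurrence {𝕜 : Type*} [NormedDivisionRing 𝕜] {y a : ℕ → 𝕜}
    {N : ℕ} (h0 : y 0 = 0) (hN : y (N + 1) = 0) (ha : ∀ k < N, 2 ≤ ‖a k‖)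
    (hrec : ∀ k < N, y k + a k * y (k + 1) + y (k + 2) = 0) {k : ℕ} (hk : k ≤ N + 1) :
    y k = 0 := by
  have hconv : ∀ j < N, 2 * ‖y (j + 1)‖ ≤ ‖y j‖ + ‖y (j + 2)‖ := fun j hj => calc
    2 * ‖y (j + 1)‖ ≤ ‖a j * y (j + 1)‖ := by
      rw [norm_mul]; exact mul_le_mul_of_nonneg_right (ha j hj) (norm_nonneg _)
    _ = ‖-(y j + y (j + 2))‖ :=
      congrArg norm (eq_neg_of_add_eq_zero_left (by rw [← hrec j hj]; abel))
    _ ≤ ‖y j‖ + ‖y (j + 2)‖ := (norm_neg _).trans_le (norm_add_le _ _)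
  have h01 : ‖y 0‖ ≤ ‖y 1‖ := by simp [h0]
  simpa [hN] using le_of_two_mul_le_add (u := fun k => ‖y k‖) h01 hconv hk

section succExtend

variable {R : Type*} [Zero R] {N : ℕ}

/-- Shifting by one leaves index `0` for the zero boundary value, so the rows of `Hmat` need no
truncated subtraction. -/
noncomputable def succExtend (x : Fin N → R) : ℕ → R :=
  Function.extend (fun j : Fin N => (j : ℕ) + 1) x 0

lemma succExtend_succ (x : Fin N → R) (i : Fin N) : succExtend x (i + 1) = x i :=
  Function.Injective.extend_apply (fun _ _ h => Fin.ext (Nat.succ_injective h)) x 0 i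

lemma succExtend_of_notMem (x : Fin N → R) {k : ℕ} (hk : ∀ j : Fin N, (j : ℕ) + 1 ≠ k) :
    succExtend x k = 0 :=
  Function.extend_apply' _ _ _ (not_exists.2 hk)

lemma succExtend_zero (x : Fin N → R) : succExtend x 0 = 0 :=
  succExtend_of_notMem x fun _ => Nat.succ_ne_zero _

lemma succExtend_of_le (x : Fin N → R) {k : ℕ} (hk : N ≤ k) : succExtend x (k + 1) = 0 :=
  succExtend_of_notMem x fun j => by omega

end succExtend

lemma sum_ite_val_add_one_eq_succExtend {R : Type*} [AddCommMonoid R] {N : ℕ} (x : Fin N → R)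
    (k : ℕ) :
    ∑ j : Fin N, (if (j : ℕ) + 1 = k then x j else 0) = succExtend x k := by
  by_cases hk : ∃ j : Fin N, (j : ℕ) + 1 = k
  · obtain ⟨i, rfl⟩ := hk
    simp [succExtend_succ, Fin.val_inj]
  · simp [succExtend_of_notMem x (not_exists.1 hk), not_exists.1 hk]

lemma Hmat_mulVec_apply {N : ℕ} (c : ℂ) (x : Fin N → ℂ) (i : Fin N) :
    (Hmat N c *ᵥ x) i =
      succExtend x i + c * succExtend x (i + 1) + succExtend x (i + 2) := by
  have hentry : ∀ j : Fin N, Hmat N c i j * x j =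
      (if (j : ℕ) + 1 = i then x j else 0) + c * (if (j : ℕ) + 1 = i + 1 then x j else 0) +
        (if (j : ℕ) + 1 = i + 2 then x j else 0) := by
    intro j
    simp only [Hmat]
    split_ifs <;> first | (exfalso; omega) | ring
  simp only [mulVec, dotProduct, hentry, Finset.sum_add_distrib, ← Finset.mul_sum,
    sum_ite_val_add_one_eq_succExtend]

lemma Hmat_sub_smul_Dmat_mulVec_apply {m n : ℕ} (c lam : ℂ) (x : Fin (m + n) → ℂ)
    (i : Fin (m + n)) :
    ((Hmat (m + n) c - lam • Dmat m n) *ᵥ x) i =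
      succExtend x i + (c - lam * if (i : ℕ) < m then 1 else -1) * succExtend x (i + 1) +
        succExtend x (i + 2) := by
  rw [sub_mulVec, smul_mulVec, Pi.sub_apply, Pi.smul_apply, Dmat, mulVec_diagonal,
    Hmat_mulVec_apply, succExtend_succ, smul_eq_mul]
  ring

lemma two_le_norm_sub_mul {𝕜 : Type*} [NormedDivisionRing 𝕜] {c lam d : 𝕜}
    (hlam : 2 + ‖c‖ ≤ ‖lam‖) (hd : ‖d‖ = 1) : 2 ≤ ‖c - lam * d‖ := by
  have := norm_sub_norm_le (lam * d) c
  rw [norm_mul, hd, mul_one, norm_sub_rev] at this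
  linarith

theorem pencil_eigenvalue_bound (m n : ℕ) (c : ℝ) (lam : ℂ)
    (h : ¬ IsUnit (Hmat (m + n) (c : ℂ) - lam • Dmat m n)) :
    ‖lam‖ < 2 + |c| := by
  by_contra! hlam
  rw [← Real.norm_eq_abs, ← Complex.norm_real] at hlam
  rw [Matrix.isUnit_iff_isUnit_det, isUnit_iff_ne_zero, not_not] at h
  obtain ⟨x, hx0, hx⟩ := exists_mulVec_eq_zero_iff.mpr h
  have hsign (k : ℕ) : ‖(if k < m then 1 else -1 : ℂ)‖ = 1 := by split_ifs <;> simp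
  have hy (k : ℕ) (hk : k ≤ m + n + 1) : succExtend x k = 0 :=
    eq_zero_of_three_term_recurrence (succExtend_zero x) (succExtend_of_le x le_rfl)
      (fun j _ => two_le_norm_sub_mul hlam (hsign j))
      (fun j hj => (Hmat_sub_smul_Dmat_mulVec_apply _ _ x ⟨j, hj⟩).symm.trans (congrFun hx _)) hk
  exact hx0 (funext fun i => by simpa [succExtend_succ] using hy (i + 1) (by omega))
end

section
/- If |c| ≥ 2, then every eigenvalue of the pencil H_{N;c} - λD_{m,n} is real. -/
open Matrix Finset

private lemma conj_mul_self (z : ℂ) : (starRingEnd ℂ) z * z = (Complex.normSq z : ℂ) :=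
  (Complex.normSq_eq_conj_mul_self (z := z)).symm

private lemma aux_zero (s : ℝ) (hs : s ≠ 0) (N : ℕ) (w : ℕ → ℂ) (hN : w N = 0)
    (h : ∀ k, k < N → (s : ℂ) * w k + w (k+1) = 0) : ∀ k, k ≤ N → w k = 0 := by
  suffices H : ∀ d k, k ≤ N → N - k = d → w k = 0 by
    intro k hk; exact H (N - k) k hk rfl
  intro d
  induction d with
  | zero =>
    intro k hk hd
    have : k = N := by omega
    subst this; exact hN
  | succ d ih =>
    intro k hk hd
    have hk' : k < N := by omega
    have h1 := h k hk'
    have h2 := ih (k+1) (by omega) (by omega)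
    rw [h2, add_zero, mul_eq_zero] at h1
    rcases h1 with h1 | h1
    · exact absurd (by exact_mod_cast h1) hs
    · exact h1

private lemma key_pos (N : ℕ) (c s : ℝ) (hsc : s * c = |c|) (hs2 : s * s = 1) (hc : 2 ≤ |c|)
    (w : ℕ → ℂ) (hwN : w N = 0) (hne : ∃ k, k < N ∧ w k ≠ 0) :
    0 < s * (c * ∑ k ∈ range N, Complex.normSq (w k)
      + ∑ k ∈ range N, 2 * ((starRingEnd ℂ) (w k) * w (k+1)).re) := by
  have hs0 : s ≠ 0 := by intro h; rw [h, mul_zero] at hs2; norm_num at hs2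
  obtain ⟨M, rfl⟩ : ∃ M, N = M + 1 := by
    obtain ⟨k, hk, -⟩ := hne
    exact ⟨N - 1, by omega⟩
  set S := ∑ k ∈ range (M+1), Complex.normSq (w k) with hS
  set T := ∑ k ∈ range (M+1), 2 * ((starRingEnd ℂ) (w k) * w (k+1)).re with hT
  set W := ∑ k ∈ range (M+1), Complex.normSq ((s:ℂ) * w k + w (k+1)) with hW
  have hterm : ∀ k, Complex.normSq ((s:ℂ) * w k + w (k+1))
      = Complex.normSq (w k) + Complex.normSq (w (k+1))
        + s * (2 * ((starRingEnd ℂ) (w k) * w (k+1)).re) := by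
    intro k
    rw [Complex.normSq_add, Complex.normSq_mul, Complex.normSq_ofReal, hs2, one_mul]
    have h1 : ((s:ℂ) * w k * (starRingEnd ℂ) (w (k+1))).re
        = s * ((w k * (starRingEnd ℂ) (w (k+1)))).re := by
      rw [mul_assoc, Complex.re_ofReal_mul]
    have h2 : (w k * (starRingEnd ℂ) (w (k+1))).re
        = ((starRingEnd ℂ) (w k) * w (k+1)).re := by
      rw [← Complex.conj_re ((starRingEnd ℂ) (w k) * w (k+1))]
      simp [mul_comm]
    rw [h1, h2]; ring
  have hshift : ∑ k ∈ range (M+1), Complex.normSq (w (k+1))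
      = S - Complex.normSq (w 0) := by
    rw [Finset.sum_range_succ, hwN]
    have := Finset.sum_range_succ' (fun k => Complex.normSq (w k)) M
    rw [hS, this]
    simp
  have hWeq : W = S + (S - Complex.normSq (w 0)) + s * T := by
    rw [hW, hT]
    rw [Finset.sum_congr rfl (fun k _ => hterm k)]
    rw [Finset.sum_add_distrib, Finset.sum_add_distrib, hshift, Finset.mul_sum]
  have hSnn : 0 ≤ S := Finset.sum_nonneg fun k _ => Complex.normSq_nonneg _
  have hW0 : 0 ≤ Complex.normSq (w 0) := Complex.normSq_nonneg _
  have hWpos : 0 < W := by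
    have hWnn : 0 ≤ W := Finset.sum_nonneg fun k _ => Complex.normSq_nonneg _
    rcases hWnn.lt_or_eq with hlt | heq
    · exact hlt
    · exfalso
      have hzero : ∀ k ∈ range (M+1), Complex.normSq ((s:ℂ) * w k + w (k+1)) = 0 := by
        rw [← Finset.sum_eq_zero_iff_of_nonneg fun k _ => Complex.normSq_nonneg _]
        exact heq.symm
      have hz : ∀ k, k < M+1 → (s:ℂ) * w k + w (k+1) = 0 := fun k hk =>
        Complex.normSq_eq_zero.mp (hzero k (Finset.mem_range.mpr hk))
      obtain ⟨k, hk, hkne⟩ := hne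
      exact hkne (aux_zero s hs0 (M+1) w hwN hz k (by omega))
  have key : s * (c * S + T) = (|c| - 2) * S + Complex.normSq (w 0) + W := by
    rw [hWeq]; nlinarith [hsc]
  rw [key]
  nlinarith

private lemma hmat_mulVec (N : ℕ) (c : ℂ) (v : Fin N → ℂ) (w : ℕ → ℂ)
    (hw : ∀ (k : ℕ) (h : k < N), w k = v ⟨k, h⟩) (hw0 : ∀ k, ¬ k < N → w k = 0) (i : Fin N) :
    (Hmat N c).mulVec v i
      = c * w ((i:ℕ)) + w ((i:ℕ)+1) + (if (i:ℕ) = 0 then 0 else w ((i:ℕ)-1)) := by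
  have hsplit : ∀ j : Fin N,
      Hmat N c i j * v j
        = (if i = j then c * v j else 0) + (if (i:ℕ)+1 = (j:ℕ) then v j else 0)
          + (if (j:ℕ)+1 = (i:ℕ) then v j else 0) := by
    intro j
    by_cases h1 : (i:ℕ) = (j:ℕ)
    · have hij : i = j := Fin.ext h1
      have h2 : ¬ ((i:ℕ)+1 = (j:ℕ)) := by omega
      have h3 : ¬ ((j:ℕ)+1 = (i:ℕ)) := by omega
      simp [Hmat, h1, hij, h2, h3]
    · have hij : ¬ i = j := fun e => h1 (by rw [e])
      by_cases h2 : (i:ℕ)+1 = (j:ℕ)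
      · have h3 : ¬ ((j:ℕ)+1 = (i:ℕ)) := by omega
        simp [Hmat, h1, hij, h2, h3]
      · by_cases h3 : (j:ℕ)+1 = (i:ℕ)
        · simp [Hmat, h1, hij, h2, h3]
        · simp [Hmat, h1, hij, h2, h3]
  have hstart : (Hmat N c).mulVec v i = ∑ j : Fin N, Hmat N c i j * v j := rfl
  rw [hstart, Finset.sum_congr rfl (fun j _ => hsplit j), Finset.sum_add_distrib,
    Finset.sum_add_distrib]
  congr 1
  · congr 1
    · rw [Finset.sum_ite_eq]
      simp [hw (i:ℕ) i.isLt]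
    · -- superdiagonal
      by_cases hsup : (i:ℕ)+1 < N
      · have hcond : ∀ j : Fin N, ((i:ℕ)+1 = (j:ℕ)) ↔ ((⟨(i:ℕ)+1, hsup⟩ : Fin N) = j) := by
          intro j
          rw [Fin.ext_iff]
        rw [Finset.sum_congr rfl (fun j _ => if_congr (hcond j) rfl rfl), Finset.sum_ite_eq]
        simp [hw _ hsup]
      · rw [hw0 _ hsup]
        apply Finset.sum_eq_zero
        intro j _
        rw [if_neg]
        intro hj
        exact hsup (hj ▸ j.isLt)
  · -- subdiagonal
    by_cases hi : (i:ℕ) = 0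
    · rw [if_pos hi]
      apply Finset.sum_eq_zero
      intro j _
      rw [if_neg]; omega
    · rw [if_neg hi]
      have hlt : (i:ℕ) - 1 < N := by have := i.isLt; omega
      have hcond : ∀ j : Fin N, ((j:ℕ)+1 = (i:ℕ)) ↔ ((⟨(i:ℕ)-1, hlt⟩ : Fin N) = j) := by
        intro j
        rw [Fin.ext_iff]
        simp only [Fin.val_mk]
        omega
      rw [Finset.sum_congr rfl (fun j _ => if_congr (hcond j) rfl rfl), Finset.sum_ite_eq]
      simp [hw _ hlt]

theorem pencil_real_spectrum_of_large_c (m n : ℕ) (c : ℝ) (hc : 2 ≤ |c|) (lam : ℂ)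
    (h : ¬ IsUnit (Hmat (m + n) (c : ℂ) - lam • Dmat m n)) :
    lam.im = 0 := by
  set N := m + n with hNdef
  have hdet : (Hmat N (c:ℂ) - lam • Dmat m n).det = 0 := by
    by_contra hd
    exact h ((Matrix.isUnit_iff_isUnit_det _).mpr (isUnit_iff_ne_zero.mpr hd))
  obtain ⟨v, hv0, hv⟩ := Matrix.exists_mulVec_eq_zero_iff.mpr hdet
  obtain ⟨i0, hi0⟩ := Function.ne_iff.mp hv0
  have hi0' : v i0 ≠ 0 := by simpa using hi0
  have hNpos : 0 < N := i0.pos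
  -- extended vector
  set w : ℕ → ℂ := fun k => if hk : k < N then v ⟨k, hk⟩ else 0 with hwdef
  have hw : ∀ (k : ℕ) (hk : k < N), w k = v ⟨k, hk⟩ := fun k hk => dif_pos hk
  have hw0 : ∀ k, ¬ k < N → w k = 0 := fun k hk => dif_neg hk
  have hwN : w N = 0 := hw0 N (lt_irrefl N)
  -- H v = lam • D v
  have hHD : (Hmat N (c:ℂ)).mulVec v = lam • (Dmat m n).mulVec v := by
    have h' := hv
    rw [Matrix.sub_mulVec, Matrix.smul_mulVec, sub_eq_zero] at h'
    exact h'
  -- quadratic forms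
  set a : ℂ := ∑ i : Fin N, (starRingEnd ℂ) (v i) * ((Hmat N (c:ℂ)).mulVec v i) with hadef
  set b : ℂ := ∑ i : Fin N, (starRingEnd ℂ) (v i) * ((Dmat m n).mulVec v i) with hbdef
  have hab : a = lam * b := by
    rw [hadef, hbdef, hHD, Finset.mul_sum]
    apply Finset.sum_congr rfl
    intro i _
    simp only [Pi.smul_apply, smul_eq_mul]
    ring
  -- a as a range sum
  have haform : a = ∑ k ∈ range N, ((starRingEnd ℂ) (w k) * ((c:ℂ) * w k + w (k+1)
      + (if k = 0 then 0 else w (k-1)))) := by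
    rw [hadef]
    have h1 : ∀ i : Fin N, (starRingEnd ℂ) (v i) * ((Hmat N (c:ℂ)).mulVec v i)
        = (starRingEnd ℂ) (w (i:ℕ)) * ((c:ℂ) * w ((i:ℕ)) + w ((i:ℕ)+1)
            + (if (i:ℕ) = 0 then 0 else w ((i:ℕ)-1))) := by
      intro i
      have hwi : w (i:ℕ) = v i := hw (i:ℕ) i.isLt
      rw [hmat_mulVec N (c:ℂ) v w hw hw0 i, hwi]
    rw [Finset.sum_congr rfl (fun i _ => h1 i)]
    exact Fin.sum_univ_eq_sum_range
      (fun k => (starRingEnd ℂ) (w k) * ((c:ℂ) * w k + w (k+1)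
        + (if k = 0 then 0 else w (k-1)))) N
  have haform2 : a = ∑ k ∈ range N, ((c:ℂ) * ((starRingEnd ℂ) (w k) * w k)
      + (starRingEnd ℂ) (w k) * w (k+1) + (starRingEnd ℂ) (w (k+1)) * w k) := by
    rw [haform]
    have hexp : ∀ k, (starRingEnd ℂ) (w k) * ((c:ℂ) * w k + w (k+1)
        + (if k = 0 then 0 else w (k-1)))
        = ((c:ℂ) * ((starRingEnd ℂ) (w k) * w k) + (starRingEnd ℂ) (w k) * w (k+1))
          + (starRingEnd ℂ) (w k) * (if k = 0 then 0 else w (k-1)) := by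
      intro k; ring
    rw [Finset.sum_congr rfl (fun k _ => hexp k), Finset.sum_add_distrib]
    have hchi : ∑ k ∈ range N, (starRingEnd ℂ) (w k) * (if k = 0 then 0 else w (k-1))
        = ∑ k ∈ range N, (starRingEnd ℂ) (w (k+1)) * w k := by
      obtain ⟨M, hM⟩ : ∃ M, N = M + 1 := ⟨N - 1, by omega⟩
      rw [hM]
      rw [Finset.sum_range_succ' (fun k => (starRingEnd ℂ) (w k) * (if k = 0 then 0 else w (k-1))) M]
      rw [Finset.sum_range_succ (fun k => (starRingEnd ℂ) (w (k+1)) * w k) M]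
      have hwM : w (M+1) = 0 := by rw [← hM]; exact hwN
      simp [hwM]
    rw [hchi, ← Finset.sum_add_distrib]
  -- a is real
  have haim : a.im = 0 := by
    rw [haform2, Complex.im_sum]
    apply Finset.sum_eq_zero
    intro k _
    have hrw : (c:ℂ) * ((starRingEnd ℂ) (w k) * w k) + (starRingEnd ℂ) (w k) * w (k+1)
        + (starRingEnd ℂ) (w (k+1)) * w k
        = (c:ℂ) * ((Complex.normSq (w k) : ℝ) : ℂ)
          + ((starRingEnd ℂ) (w k) * w (k+1)
            + (starRingEnd ℂ) ((starRingEnd ℂ) (w k) * w (k+1))) := by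
      rw [conj_mul_self]
      rw [_root_.map_mul, Complex.conj_conj]
      ring
    rw [hrw]
    simp [Complex.add_im, Complex.conj_im, Complex.mul_im]
    ring
  -- a.re
  have hare : a.re = c * ∑ k ∈ range N, Complex.normSq (w k)
      + ∑ k ∈ range N, 2 * ((starRingEnd ℂ) (w k) * w (k+1)).re := by
    rw [haform2, Complex.re_sum, Finset.mul_sum, ← Finset.sum_add_distrib]
    apply Finset.sum_congr rfl
    intro k _
    have e1 : (starRingEnd ℂ) (w (k+1)) * w k
        = (starRingEnd ℂ) ((starRingEnd ℂ) (w k) * w (k+1)) := by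
      rw [_root_.map_mul, Complex.conj_conj]; ring
    rw [conj_mul_self, e1]
    simp only [Complex.add_re, Complex.conj_re]
    rw [← Complex.ofReal_mul, Complex.ofReal_re]
    ring
  -- b is real
  have hbim : b.im = 0 := by
    rw [hbdef, Complex.im_sum]
    apply Finset.sum_eq_zero
    intro i _
    have : (Dmat m n).mulVec v i = (if (i:ℕ) < m then 1 else -1) * v i := by
      simp [Dmat, Matrix.mulVec_diagonal]
    rw [this]
    split_ifs with hi
    · rw [one_mul, conj_mul_self]
      exact Complex.ofReal_im _
    · rw [neg_one_mul, mul_neg, conj_mul_self]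
      simp
  -- positivity
  set s : ℝ := if 0 ≤ c then 1 else -1 with hsdef
  have hsc : s * c = |c| := by
    rw [hsdef]
    split_ifs with h0
    · rw [abs_of_nonneg h0, one_mul]
    · rw [abs_of_neg (lt_of_not_ge h0)]; ring
  have hs2 : s * s = 1 := by rw [hsdef]; split_ifs <;> norm_num
  have hne : ∃ k, k < N ∧ w k ≠ 0 :=
    ⟨i0, i0.isLt, by rw [hw _ i0.isLt]; simpa using hi0'⟩
  have hpos := key_pos N c s hsc hs2 hc w hwN hne
  -- conclude
  by_contra him
  have h1 : a.im = lam.im * b.re + lam.re * b.im := by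
    rw [hab, Complex.mul_im]; ring
  rw [haim, hbim, mul_zero, add_zero] at h1
  have hbre : b.re = 0 := by
    rcases mul_eq_zero.mp h1.symm with h' | h'
    · exact absurd h' him
    · exact h'
  have hb0 : b = 0 := Complex.ext hbre hbim
  have ha0 : a = 0 := by rw [hab, hb0, mul_zero]
  have hare0 : c * ∑ k ∈ range N, Complex.normSq (w k)
      + ∑ k ∈ range N, 2 * ((starRingEnd ℂ) (w k) * w (k+1)).re = 0 := by
    rw [← hare, ha0, Complex.zero_re]
  rw [hare0, mul_zero] at hpos
  exact lt_irrefl 0 hpos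
end

section
/- Let σ = z + z⁻¹ and τ = w + w⁻¹ with σ ≠ ±2 and τ ≠ ±2, N = m + n. Then det(H_{N;0} - D_{m,n;σ,τ}) = (-1)^{m+n} · γ_{m,n}(z,w) / ((z - z⁻¹)(w - w⁻¹)), where γ_{m,n}(z,w) = (z^{m+1} - z^{-m-1})(w^{n+1} - w^{-n-1}) - (z^m - z^{-m})(w^n - w^{-n}). -/
/-! `H_{N;0} - D_{m,n;σ,τ}` is tridiagonal with unit off-diagonals, so expanding along the last
row, its leading principal minors satisfy `D_{N+2} = a_{N+1} D_{N+1} - D_N`, where `a_k` is the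
`k`-th diagonal entry. For constant `a_k = -(z + z⁻¹)` this is the recurrence satisfied by
`(-1)^N (z^{N+1} - z^{-N-1})`, which gives the minors of size at most `m`. Beyond that
`a_k = -(w + w⁻¹)`, and `(-1)^{m+n} γ_{m,n}(z,w)` satisfies the same recurrence in `n` and
matches the minors at `n = 0, 1`. -/

open Matrix

noncomputable def Dst (m n : ℕ) (σ τ : ℂ) : Matrix (Fin (m + n)) (Fin (m + n)) ℂ :=
  Matrix.diagonal (fun i => if (i : ℕ) < m then σ else τ)

noncomputable def gammaF (m n : ℕ) (z w : ℂ) : ℂ :=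
  (z ^ (m + 1) - z ^ (-(m + 1) : ℤ)) * (w ^ (n + 1) - w ^ (-(n + 1) : ℤ)) -
    (z ^ m - z ^ (-(m : ℤ))) * (w ^ n - w ^ (-(n : ℤ)))

section Tridiagonal

variable {R : Type*} [CommRing R]

def tridiag (a : ℕ → R) (N : ℕ) : Matrix (Fin N) (Fin N) R :=
  fun i j => if (i : ℕ) = j then a i else if (i : ℕ) + 1 = j ∨ (j : ℕ) + 1 = i then 1 else 0

lemma tridiag_apply_eq_zero (a : ℕ → R) {N : ℕ} {i j : Fin N}
    (h : (i : ℕ) + 1 < j ∨ (j : ℕ) + 1 < i) : tridiag a N i j = 0 := by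
  rw [tridiag, if_neg (by omega), if_neg (by omega)]

lemma tridiag_submatrix (a : ℕ → R) {M N : ℕ} (f g : Fin M → Fin N)
    (hf : ∀ i, (f i : ℕ) = i) (hg : ∀ j, (g j : ℕ) = j) :
    (tridiag a N).submatrix f g = tridiag a M := by
  ext i j
  simp only [submatrix_apply, tridiag, hf, hg]

@[simp] lemma det_tridiag_zero (a : ℕ → R) : (tridiag a 0).det = 1 :=
  det_fin_zero

@[simp] lemma det_tridiag_one (a : ℕ → R) : (tridiag a 1).det = a 0 := by
  simp [tridiag]

lemma det_tridiag_add_two (a : ℕ → R) (N : ℕ) :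
    (tridiag a (N + 2)).det = a (N + 1) * (tridiag a (N + 1)).det - (tridiag a N).det := by
  -- the minor of the entry `(N + 1, N)` has `e_N` as last column
  have hminor : ((tridiag a (N + 2)).submatrix Fin.castSucc
      (Fin.castSucc (Fin.last N)).succAbove).det = (tridiag a N).det := by
    rw [det_succ_column _ (Fin.last N), Fintype.sum_eq_single (Fin.last N)]
    · rw [submatrix_submatrix, tridiag_submatrix a (Fin.castSucc ∘ (Fin.last N).succAbove) _
        (fun _ => by simp) (fun _ => by simp)]
      simp [tridiag]
    · intro i hi
      rw [submatrix_apply, Fin.succAbove_castSucc_self, tridiag_apply_eq_zero, mul_zero, zero_mul]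
      left
      simpa using Fin.val_lt_last hi
  rw [det_succ_row _ (Fin.last (N + 1)),
    Fintype.sum_eq_add (Fin.last (N + 1)) (Fin.castSucc (Fin.last N))]
  · rw [Fin.succAbove_last, hminor,
      tridiag_submatrix a Fin.castSucc Fin.castSucc (fun _ => rfl) (fun _ => rfl)]
    simp [tridiag, sub_eq_add_neg]
  · exact (Fin.castSucc_lt_last _).ne'
  · rintro j ⟨hj, hj'⟩
    rw [tridiag_apply_eq_zero, mul_zero, zero_mul]
    have hlt := Fin.val_lt_last hj
    have hne : (j : ℕ) ≠ N := fun h => hj' (Fin.ext h)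
    right
    simp only [Fin.val_last]
    omega

end Tridiagonal

section Continuant

variable {K : Type*} [Field K] {z w : K}

lemma pow_sub_inv_pow_add_two (hz : z ≠ 0) (k : ℕ) :
    z ^ (k + 2) - z⁻¹ ^ (k + 2) =
      (z + z⁻¹) * (z ^ (k + 1) - z⁻¹ ^ (k + 1)) - (z ^ k - z⁻¹ ^ k) := by
  linear_combination (z⁻¹ ^ k - z ^ k) * mul_inv_cancel₀ hz

lemma sub_inv_ne_zero (hz : z ≠ 0) (h2 : z + z⁻¹ ≠ 2) (h2' : z + z⁻¹ ≠ -2) : z - z⁻¹ ≠ 0 := by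
  intro h
  obtain rfl | rfl : z = 1 ∨ z = -1 := by
    rw [← mul_self_eq_one_iff]
    linear_combination z * h + mul_inv_cancel₀ hz
  · norm_num at h2
  · norm_num at h2'

lemma det_tridiag_mul_sub_inv_of_const (hz : z ≠ 0) {a : ℕ → K} {N : ℕ}
    (ha : ∀ k < N, a k = -(z + z⁻¹)) :
    (tridiag a N).det * (z - z⁻¹) = (-1) ^ N * (z ^ (N + 1) - z⁻¹ ^ (N + 1)) := by
  induction N using Nat.twoStepInduction with
  | zero => simp
  | one => rw [det_tridiag_one, ha 0 one_pos]; ring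
  | more N ih₀ ih₁ =>
    rw [det_tridiag_add_two, ha (N + 1) (by omega)]
    linear_combination (-(z + z⁻¹)) * ih₁ (fun k hk => ha k (by omega)) -
      ih₀ (fun k hk => ha k (by omega)) - (-1) ^ N * pow_sub_inv_pow_add_two hz (N + 1)

lemma det_tridiag_mul_of_piecewise_const (hz : z ≠ 0) (hw : w ≠ 0) {a : ℕ → K} {m : ℕ}
    (hlow : ∀ k < m, a k = -(z + z⁻¹))
    (hhigh : ∀ k, m ≤ k → a k = -(w + w⁻¹)) (n : ℕ) :
    (tridiag a (m + n)).det * ((z - z⁻¹) * (w - w⁻¹)) =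
      (-1) ^ (m + n) * ((z ^ (m + 1) - z⁻¹ ^ (m + 1)) * (w ^ (n + 1) - w⁻¹ ^ (n + 1)) -
        (z ^ m - z⁻¹ ^ m) * (w ^ n - w⁻¹ ^ n)) := by
  have hσ : ∀ N ≤ m, (tridiag a N).det * (z - z⁻¹) = (-1) ^ N * (z ^ (N + 1) - z⁻¹ ^ (N + 1)) :=
    fun N hN => det_tridiag_mul_sub_inv_of_const hz fun k hk => hlow k (by omega)
  induction n using Nat.twoStepInduction with
  | zero => linear_combination (w - w⁻¹) * hσ m le_rfl
  | one =>
    cases m with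
    | zero =>
      rw [zero_add, det_tridiag_one, hhigh 0 le_rfl]
      ring
    | succ m =>
      rw [det_tridiag_add_two, hhigh (m + 1) le_rfl]
      linear_combination (-(w + w⁻¹) * (w - w⁻¹)) * hσ (m + 1) le_rfl -
        (w - w⁻¹) * hσ m (by omega)
  | more n ih₀ ih₁ =>
    rw [← add_assoc, det_tridiag_add_two, hhigh (m + n + 1) (by omega)]
    linear_combination (-(w + w⁻¹)) * ih₁ - ih₀
      - (-1) ^ (m + n) * (z ^ (m + 1) - z⁻¹ ^ (m + 1)) * pow_sub_inv_pow_add_two hw (n + 1)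
      + (-1) ^ (m + n) * (z ^ m - z⁻¹ ^ m) * pow_sub_inv_pow_add_two hw n

end Continuant

lemma gammaF_eq (m n : ℕ) (z w : ℂ) :
    gammaF m n z w = (z ^ (m + 1) - z⁻¹ ^ (m + 1)) * (w ^ (n + 1) - w⁻¹ ^ (n + 1)) -
      (z ^ m - z⁻¹ ^ m) * (w ^ n - w⁻¹ ^ n) := by
  simp only [gammaF, ← Nat.cast_succ, _root_.zpow_neg, zpow_natCast, inv_pow]

lemma Hmat_zero_sub_Dst (m n : ℕ) (σ τ : ℂ) :
    Hmat (m + n) 0 - Dst m n σ τ = tridiag (fun k => -(if k < m then σ else τ)) (m + n) := by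
  ext i j
  by_cases h : i = j
  · simp [h, Hmat, Dst, tridiag]
  · simp [h, Fin.val_ne_of_ne h, Hmat, Dst, tridiag]

theorem det_pencil_formula (m n : ℕ) (z w : ℂ) (hz : z ≠ 0) (hw : w ≠ 0)
    (hz2 : z + z⁻¹ ≠ 2) (hz2' : z + z⁻¹ ≠ -2)
    (hw2 : w + w⁻¹ ≠ 2) (hw2' : w + w⁻¹ ≠ -2) :
    (Hmat (m + n) 0 - Dst m n (z + z⁻¹) (w + w⁻¹)).det =
      (-1) ^ (m + n) * gammaF m n z w / ((z - z⁻¹) * (w - w⁻¹)) := by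
  rw [Hmat_zero_sub_Dst, gammaF_eq,
    eq_div_iff (mul_ne_zero (sub_inv_ne_zero hz hz2 hz2') (sub_inv_ne_zero hw hw2 hw2'))]
  exact det_tridiag_mul_of_piecewise_const hz hw (fun k hk => by simp [hk])
    (fun k hk => by simp [not_lt.2 hk]) n
end

section
/- For all m, n ∈ ℕ and all nonzero complex z, w: β_{m,n}(z,w) = z^{-2m-2}·r_m^{(1)}(z)·r_m^{(2)}(z) when n = m and w = z, where r_m^{(1)}(z) = (z+i)z^{2m+1} - i(z-i) and r_m^{(2)}(z) = (z-i)z^{2m+1} + i(z+i). That is, β_{m,m}(z,z) = z^{-2m-2}·r_m^{(1)}(z)·r_m^{(2)}(z). -/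
noncomputable def betaF (m n : ℕ) (z w : ℂ) : ℂ :=
  (z ^ (m + 1) - z ^ (-(m + 1) : ℤ)) * (w ^ (n + 1) - w ^ (-(n + 1) : ℤ)) +
    (z ^ m - z ^ (-(m : ℤ))) * (w ^ n - w ^ (-(n : ℤ)))

noncomputable def r1 (m : ℕ) (z : ℂ) : ℂ :=
  (z + Complex.I) * z ^ (2 * m + 1) - Complex.I * (z - Complex.I)

noncomputable def r2 (m : ℕ) (z : ℂ) : ℂ :=
  (z - Complex.I) * z ^ (2 * m + 1) + Complex.I * (z + Complex.I)

theorem beta_factorisation (m : ℕ) (z : ℂ) (hz : z ≠ 0) :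
    betaF m m z z = z ^ (-(2 * (m : ℤ) + 2)) * r1 m z * r2 m z := by
  unfold betaF r1 r2
  have h1 : z ^ (-(m + 1) : ℤ) = 1 / z ^ (m + 1 : ℕ) := by
    rw [zpow_neg, one_div]; norm_cast
  have h2 : z ^ (-(m : ℤ)) = 1 / z ^ (m : ℕ) := by
    rw [zpow_neg, one_div]; norm_cast
  have h3 : z ^ (-(2 * (m : ℤ) + 2)) = 1 / z ^ (2 * m + 2 : ℕ) := by
    rw [show (-(2*(m:ℤ)+2)) = -((2*m+2 : ℕ) : ℤ) by push_cast; ring, zpow_neg, one_div]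
    norm_cast
  rw [h1, h2, h3]
  field_simp
  ring_nf
  simp only [Complex.I_sq, Complex.I_pow_four]
  ring
end

section
/- Let m ∈ ℕ be odd. The real polynomial f(y) = (y-1)y^{2m+1} - (y+1) has exactly one root in the interval (1, ∞), and for all sufficiently large m this root y_m satisfies exp(log(m)(1-δ_m)/(2m)) < y_m < exp(log(m)/(2m)) where δ_m = (log m)^{-1/2}; in particular y_m = 1 + (log m)/(2m)·(1+o(1)) as m → ∞. -/
private lemma f_mono (m : ℕ) :
    StrictMonoOn (fun y : ℝ => (y - 1) * y ^ (2 * m + 1) - (y + 1)) (Set.Ici 1) := by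
  intro a ha b hb hab
  simp only [Set.mem_Ici] at ha hb
  have hb1 : 1 < b := lt_of_le_of_lt ha hab
  have hpow : a ^ (2*m+1) < b ^ (2*m+1) := pow_lt_pow_left₀ hab (by linarith) (by omega)
  have ha1 : (1:ℝ) ≤ a ^ (2*m+1) := one_le_pow₀ ha
  simp only
  nlinarith [mul_pos (sub_pos.2 hb1) (sub_pos.2 hpow),
    mul_nonneg (sub_pos.2 hab).le (sub_nonneg.2 ha1)]

private lemma part1 (m : ℕ) (hm : Odd m) :
    ∃! y : ℝ, 1 < y ∧ (y - 1) * y ^ (2 * m + 1) - (y + 1) = 0 := by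
  have hm1 : 1 ≤ m := hm.pos
  set f : ℝ → ℝ := fun y => (y - 1) * y ^ (2 * m + 1) - (y + 1) with hf
  have hc : Continuous f := by fun_prop
  have hf1 : f 1 = -2 := by norm_num [hf]
  have hf2 : 0 ≤ f 2 := by
    have h8 : (2:ℝ)^3 ≤ 2^(2*m+1) := pow_le_pow_right₀ one_le_two (by omega)
    simp only [hf]
    norm_num at h8 ⊢
    linarith
  obtain ⟨y, hy, hfy⟩ := intermediate_value_Icc (by norm_num : (1:ℝ) ≤ 2)
    hc.continuousOn (by rw [hf1]; exact ⟨by norm_num, hf2⟩)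
  have hy1 : 1 < y := by
    rcases eq_or_lt_of_le hy.1 with h | h
    · exfalso; rw [← h, hf1] at hfy; norm_num at hfy
    · exact h
  refine ⟨y, ⟨hy1, hfy⟩, ?_⟩
  rintro z ⟨hz1, hfz⟩
  exact (f_mono m).injOn (Set.mem_Ici.2 hz1.le) (Set.mem_Ici.2 hy1.le)
    (show f z = f y by rw [hfy]; exact hfz)

private lemma exp_gt_sq {t : ℝ} (ht : 2 ≤ t) : t ^ 2 < Real.exp t := by
  have h1 : t/4 + 1 < Real.exp (t/4) := by
    have := Real.add_one_lt_exp (x := t/4) (by linarith)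
    linarith
  have h2 : (0:ℝ) < t/4 + 1 := by linarith
  have h3 : (t/4 + 1)^4 < Real.exp (t/4) ^ 4 :=
    pow_lt_pow_left₀ h1 h2.le (by norm_num)
  have h4 : Real.exp (t/4) ^ 4 = Real.exp t := by
    rw [← Real.exp_nat_mul]; congr 1; push_cast; ring
  nlinarith [mul_nonneg (sq_nonneg (t/4 - 1)) (by nlinarith [sq_nonneg (t/4+1)] : (0:ℝ) ≤ (t/4+1)^2 + t)]

private lemma part2 (m : ℕ) (hM : 60 ≤ m) (y : ℝ) (hy1 : 1 < y)
    (hroot : (y - 1) * y ^ (2 * m + 1) - (y + 1) = 0) :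
    Real.exp (Real.log m * (1 - (Real.log m) ^ (-(1 : ℝ) / 2)) / (2 * m)) < y ∧
      y < Real.exp (Real.log m / (2 * m)) := by
  have hm60 : (60:ℝ) ≤ (m:ℝ) := by exact_mod_cast hM
  have hm0 : (0:ℝ) < (m:ℝ) := by linarith
  set L := Real.log (m:ℝ) with hLdef
  have hexpL : Real.exp L = (m:ℝ) := Real.exp_log hm0
  have hexp4 : Real.exp 4 < 60 := by
    have h := Real.exp_one_lt_d9
    have h4 : Real.exp 4 = Real.exp 1 ^ 4 := by
      rw [← Real.exp_nat_mul]; norm_num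
    have hp : Real.exp 1 ^ 4 < 2.7182818286 ^ 4 :=
      pow_lt_pow_left₀ h (Real.exp_pos 1).le (by norm_num)
    rw [h4]; nlinarith
  have hL : (4:ℝ) ≤ L := by
    rw [hLdef, Real.le_log_iff_exp_le hm0]
    linarith
  have hL0 : (0:ℝ) < L := by linarith
  have hLm : L ≤ (m:ℝ) := by
    have := Real.log_le_sub_one_of_pos hm0
    linarith
  set s := Real.sqrt L with hsdef
  have hs0 : 0 ≤ s := Real.sqrt_nonneg L
  have hss : s * s = L := Real.mul_self_sqrt hL0.le
  have hs2 : 2 ≤ s := by nlinarith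
  have hsinv : s * s⁻¹ = 1 := mul_inv_cancel₀ (by linarith)
  have hδ : L ^ (-(1:ℝ)/2) = s⁻¹ := by
    rw [show (-(1:ℝ)/2) = -(1/2) by ring, Real.rpow_neg hL0.le, ← Real.sqrt_eq_rpow]
  have hδ2 : s⁻¹ ≤ 1/2 := by nlinarith
  have hδpos : 0 < s⁻¹ := by nlinarith
  have hLs : L * s⁻¹ = s := by rw [← hss, mul_assoc, hsinv, mul_one]
  clear_value s
  set x := L * (1 - L ^ (-(1:ℝ) / 2)) / (2 * (m:ℝ)) with hxdef
  have hx0 : 0 ≤ x := by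
    rw [hxdef, hδ]
    apply div_nonneg (mul_nonneg hL0.le (by linarith)) (by linarith)
  have hxle : x ≤ L / (2*(m:ℝ)) := by
    rw [hxdef, hδ]
    gcongr
    linarith
  have hx12 : x ≤ 1/2 := by
    have h : L/(2*(m:ℝ)) ≤ 1/2 := by
      rw [div_le_div_iff₀ (by linarith) (by norm_num)]
      linarith
    linarith
  have h2mx : ((2*m:ℕ):ℝ) * x = L - s := by
    push_cast
    rw [hxdef, hδ, mul_div_assoc']
    rw [mul_comm (2*(m:ℝ)) (L * (1 - s⁻¹)), mul_div_assoc,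
      div_self (by positivity : (2*(m:ℝ)) ≠ 0), mul_one, mul_sub, mul_one, hLs]
  have hxm : x * (m:ℝ) ≤ L/2 := by
    have h1 := mul_le_mul_of_nonneg_right hxle hm0.le
    have h2 : L/(2*(m:ℝ)) * m = L/2 := by field_simp
    linarith
  set v := Real.exp x with hvdef
  have hv1 : 1 ≤ v := Real.one_le_exp hx0
  have hv0 : 0 < v := Real.exp_pos x
  have hvsq : v^2 ≤ Real.exp 1 := by
    rw [hvdef, ← Real.exp_nat_mul]
    apply Real.exp_le_exp.2
    push_cast; linarith
  have hvm : v ^ (2*m) = (m:ℝ) * Real.exp (-s) := by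
    rw [hvdef, ← Real.exp_nat_mul, h2mx, Real.exp_sub, hexpL,
      Real.exp_neg, div_eq_mul_inv]
  have hinv : Real.exp (-x) * v = 1 := by rw [hvdef, ← Real.exp_add]; simp
  have haux := Real.add_one_le_exp (-x)
  clear_value v x
  clear hδ hxdef hsdef
  have hvx : v - 1 ≤ x * v := by
    linarith [mul_le_mul_of_nonneg_right haux hv0.le, hinv]
  have hLlt : L < Real.exp s := by
    have h := exp_gt_sq hs2
    have h2 : L = s^2 := by rw [sq]; exact hss.symm
    linarith
  have hLes : L * Real.exp (-s) < 1 := by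
    have h1 : Real.exp s * Real.exp (-s) = 1 := by rw [← Real.exp_add]; simp
    linarith [mul_pos (sub_pos.2 hLlt) (Real.exp_pos (-s)), h1]
  have key : (v - 1) * v ^ (2*m+1) < v + 1 := by
    have e1 : v ^ (2*m+1) = ((m:ℝ) * Real.exp (-s)) * v := by rw [pow_succ, hvm]
    have e2 : (v-1) * v^(2*m+1) ≤ (x*v) * (((m:ℝ) * Real.exp (-s)) * v) := by
      rw [e1]
      apply mul_le_mul_of_nonneg_right hvx
      positivity
    have e3 : (x*v) * (((m:ℝ)*Real.exp (-s)) * v) = (x*(m:ℝ)) * Real.exp (-s) * v^2 := by ring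
    have e4 : (x*(m:ℝ)) * Real.exp (-s) * v^2 ≤ (L/2) * Real.exp (-s) * v^2 :=
      mul_le_mul_of_nonneg_right
        (mul_le_mul_of_nonneg_right hxm (Real.exp_pos (-s)).le) (sq_nonneg v)
    have e5 : (L/2) * Real.exp (-s) * v^2 ≤ (1/2) * v^2 := by
      apply mul_le_mul_of_nonneg_right _ (sq_nonneg v)
      linarith [hLes]
    have e6 : (1/2) * v^2 ≤ (1/2) * Real.exp 1 := by linarith [hvsq]
    have e7 : Real.exp 1 < 2.72 := lt_trans Real.exp_one_lt_d9 (by norm_num)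
    linarith
  have hvy : v < y := by
    by_contra h
    push_neg at h
    have hmono := (f_mono m).monotoneOn (Set.mem_Ici.2 hy1.le) (Set.mem_Ici.2 hv1) h
    linarith [key, hroot, hmono]
  -- upper bound
  set u := Real.exp (L / (2 * (m:ℝ))) with hudef
  have hum : u ^ (2*m) = (m:ℝ) := by
    rw [hudef, ← Real.exp_nat_mul]
    have h : ((2*m:ℕ):ℝ) * (L / (2 * (m:ℝ))) = L := by
      push_cast; field_simp
    rw [h, hexpL]
  have hu1 : L/(2*(m:ℝ)) + 1 ≤ u := Real.add_one_le_exp _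
  have hupos : 0 < L/(2*(m:ℝ)) := by positivity
  have hu1' : 1 < u := by linarith
  clear_value u
  have hfu : 0 < (u-1) * u^(2*m+1) - (u+1) := by
    have e1 : u^(2*m+1) = (m:ℝ) * u := by rw [pow_succ, hum]
    rw [e1]
    have h3 : L/(2*(m:ℝ)) * m = L/2 := by field_simp
    have h2 : 2 ≤ (u - 1) * m := by
      have h4 := mul_le_mul_of_nonneg_right (show L/(2*(m:ℝ)) ≤ u - 1 by linarith) hm0.le
      linarith
    linarith [mul_le_mul_of_nonneg_right h2 (by linarith : (0:ℝ) ≤ u), hu1']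
  have hyu : y < u := by
    by_contra h
    push_neg at h
    have hmono := (f_mono m).monotoneOn (Set.mem_Ici.2 hu1'.le) (Set.mem_Ici.2 hy1.le) h
    linarith [hroot, hfu, hmono]
  exact ⟨hvy, hyu⟩


theorem odd_root_existence_and_asymptotics :
    (∀ m : ℕ, Odd m →
      ∃! y : ℝ, 1 < y ∧ (y - 1) * y ^ (2 * m + 1) - (y + 1) = 0) ∧
    (∃ M : ℕ, ∀ m : ℕ, M ≤ m → Odd m → ∀ y : ℝ, 1 < y →
      (y - 1) * y ^ (2 * m + 1) - (y + 1) = 0 →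
      Real.exp (Real.log m * (1 - (Real.log m) ^ (-(1 : ℝ) / 2)) / (2 * m)) < y ∧
        y < Real.exp (Real.log m / (2 * m))) := by
  exact ⟨part1, 60, fun m hM _ y hy1 hroot => part2 m hM y hy1 hroot⟩
end

section
/- If m ∈ ℕ is even, then (y-1)y^{2m+1} + (y+1) > 0 for all y > 0; consequently the equation r_m^{(2)}(iy) = 0, where r_m^{(2)}(z) = (z-i)z^{2m+1} + i(z+i), has no solutions with y ∈ ℝ. -/
lemma gpos (m : ℕ) : ∀ y : ℝ, 0 < (y - 1) * y ^ (2 * m + 1) + (y + 1) := by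
  intro y
  have hrw : y ^ (2 * m + 1) = y * (y ^ m) ^ 2 := by
    rw [pow_succ, ← pow_mul, mul_comm 2 m, mul_comm]
  rw [hrw]
  set s := (y ^ m) ^ 2 with hs
  have hs0 : 0 ≤ s := sq_nonneg _
  rcases le_or_gt 1 y with h1 | h1
  · nlinarith [mul_nonneg (mul_nonneg (by linarith : (0:ℝ) ≤ y - 1) (by linarith : (0:ℝ) ≤ y)) hs0]
  · rcases lt_or_ge (-1) y with h2 | h2
    · have hy1 : |y| ≤ 1 := abs_le.2 ⟨h2.le, h1.le⟩
      have hs1 : s ≤ 1 := by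
        calc s = |y ^ m| ^ 2 := by rw [sq_abs]
        _ = |y| ^ m * |y| ^ m := by rw [abs_pow]; ring
        _ ≤ 1 := by nlinarith [pow_le_one₀ (abs_nonneg y) hy1 (n := m), pow_nonneg (abs_nonneg y) m]
      rcases eq_or_lt_of_le hs0 with h0 | h0
      · have hz : (y - 1) * (y * s) = 0 := by rw [← h0]; ring
        linarith
      · nlinarith [mul_pos h0 (by nlinarith : (0:ℝ) < y^2 + 1),
          mul_nonneg (by linarith : (0:ℝ) ≤ 1 - s) (by linarith : (0:ℝ) ≤ y + 1)]
    · have hs1 : 1 ≤ s := by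
        have h3 : 1 ≤ |y| := by rw [abs_of_nonpos (by linarith)]; linarith
        have h4 : 1 ≤ |y| ^ m := one_le_pow₀ h3
        calc (1:ℝ) ≤ |y| ^ m * |y| ^ m := by nlinarith
        _ = |y ^ m| ^ 2 := by rw [abs_pow]; ring
        _ = s := sq_abs _
      nlinarith [mul_nonneg (by linarith : (0:ℝ) ≤ s - 1) (by nlinarith : (0:ℝ) ≤ y^2 - y)]

theorem even_no_imaginary_roots (m : ℕ) (hm : 0 < m) (hme : Even m) :
    (∀ y : ℝ, 0 < y → 0 < (y - 1) * y ^ (2 * m + 1) + (y + 1)) ∧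
      (∀ y : ℝ, r2 m (Complex.I * y) ≠ 0) := by
  refine ⟨fun y _ => gpos m y, fun y => ?_⟩
  have hI : (Complex.I) ^ (2 * m + 1) = Complex.I := by
    rw [pow_succ, pow_mul, Complex.I_sq, hme.neg_one_pow, one_mul]
  have key : r2 m (Complex.I * y)
      = -((((y - 1) * y ^ (2 * m + 1) + (y + 1) : ℝ)) : ℂ) := by
    simp only [r2, mul_pow, hI]
    push_cast
    ring_nf
    rw [Complex.I_sq]
    ring
  rw [key]
  exact neg_ne_zero.2 (Complex.ofReal_ne_zero.2 (gpos m y).ne')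
end

section
/- Define G_m(s) = e^s·tanh(ms) for s > 0 and F_m(z) = (z^{m+1} - z^{-m-1})/(z^m - z^{-m}). If z = e^{s+iθ} with s > 0 and θ ∈ ℝ, then |F_m(z)| > G_m(s). -/
noncomputable def Fm (m : ℕ) (z : ℂ) : ℂ :=
  (z ^ (m + 1) - z ^ (-(m + 1) : ℤ)) / (z ^ m - z ^ (-(m : ℤ)))

/-!
With `z = exp w` we have `z ^ n - z ^ (-n) = 2 sinh (n w)`, so
`F_m (exp w) = sinh ((m+1) w) / sinh (m w)`. Since `|sinh (x + i y)|² = sinh² x + sin² y`, the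
modulus of `sinh w` lies between `|sinh (Re w)|` and `cosh (Re w)`, hence
`|F_m| ≥ sinh (m s + s) / cosh (m s)`; finally
`sinh (m s + s) - e^s sinh (m s) = e^(-m s) sinh s > 0`.
-/

namespace Complex

theorem sinh_eq_sinh_re_mul_cos_add_cosh_re_mul_sin (z : ℂ) :
    sinh z = ↑(Real.sinh z.re * Real.cos z.im) + ↑(Real.cosh z.re * Real.sin z.im) * I := by
  conv_lhs => rw [← re_add_im z]
  rw [sinh_add, sinh_mul_I, cosh_mul_I]
  push_cast
  ring

theorem normSq_sinh (z : ℂ) : normSq (sinh z) = Real.sinh z.re ^ 2 + Real.sin z.im ^ 2 := by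
  rw [sinh_eq_sinh_re_mul_cos_add_cosh_re_mul_sin, normSq_add_mul_I]
  linear_combination
    Real.sin z.im ^ 2 * Real.cosh_sq' z.re + Real.sinh z.re ^ 2 * Real.sin_sq_add_cos_sq z.im

theorem abs_sinh_re_le_norm_sinh (z : ℂ) : |Real.sinh z.re| ≤ ‖sinh z‖ := by
  rw [← sq_le_sq₀ (abs_nonneg _) (norm_nonneg _), sq_abs, ← normSq_eq_norm_sq, normSq_sinh]
  exact le_add_of_nonneg_right (sq_nonneg _)

theorem norm_sinh_le_cosh_re (z : ℂ) : ‖sinh z‖ ≤ Real.cosh z.re := by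
  rw [← sq_le_sq₀ (norm_nonneg _) (Real.cosh_pos _).le, ← normSq_eq_norm_sq, normSq_sinh,
    Real.cosh_sq']
  linarith [Real.sin_sq_le_one z.im]

theorem exp_pow_sub_exp_zpow_neg (w : ℂ) (n : ℕ) :
    exp w ^ n - exp w ^ (-(n : ℤ)) = 2 * sinh (n * w) := by
  rw [zpow_neg, zpow_natCast, ← exp_nat_mul, ← exp_neg, sinh]
  ring

end Complex

theorem Real.exp_mul_sinh_lt_sinh_add (x : ℝ) {s : ℝ} (hs : 0 < s) :
    exp s * sinh x < sinh (x + s) := by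
  have h_diff : sinh (x + s) - exp s * sinh x = exp (-x) * sinh s := by
    simp only [sinh_eq, neg_add, exp_add]
    ring
  have : 0 < exp (-x) * sinh s := mul_pos (exp_pos _) (sinh_pos_iff.mpr hs)
  linarith

open Complex in
theorem Fm_exp (m : ℕ) (w : ℂ) : Fm m (exp w) = sinh ((m + 1) * w) / sinh (m * w) := by
  have h := exp_pow_sub_exp_zpow_neg w (m + 1)
  push_cast at h
  rw [Fm, h, exp_pow_sub_exp_zpow_neg, mul_div_mul_left _ _ two_ne_zero]

theorem Fm_lower_bound (m : ℕ) (hm : 1 ≤ m) (s θ : ℝ) (hs : 0 < s) :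
    Real.exp s * Real.tanh (m * s) <
      ‖Fm m (Complex.exp (s + θ * Complex.I))‖ := by
  set w : ℂ := s + θ * Complex.I
  have h_num : Real.sinh (m * s + s) ≤ ‖Complex.sinh ((m + 1) * w)‖ := by
    simpa [w, add_mul] using
      (le_abs_self _).trans (Complex.abs_sinh_re_le_norm_sinh ((m + 1) * w))
  have h_den : ‖Complex.sinh (m * w)‖ ≤ Real.cosh (m * s) := by
    simpa [w] using Complex.norm_sinh_le_cosh_re (m * w)
  have h_den_pos : 0 < ‖Complex.sinh (m * w)‖ := by
    have h : Real.sinh (m * s) ≤ ‖Complex.sinh (m * w)‖ := by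
      simpa [w] using (le_abs_self _).trans (Complex.abs_sinh_re_le_norm_sinh (m * w))
    have hms : 0 < (m : ℝ) * s := mul_pos (Nat.cast_pos.mpr hm) hs
    exact (Real.sinh_pos_iff.mpr hms).trans_le h
  rw [Fm_exp, norm_div]
  calc Real.exp s * Real.tanh (m * s) = Real.exp s * Real.sinh (m * s) / Real.cosh (m * s) := by
        rw [Real.tanh_eq_sinh_div_cosh, mul_div_assoc]
    _ < Real.sinh (m * s + s) / Real.cosh (m * s) :=
        div_lt_div_of_pos_right (Real.exp_mul_sinh_lt_sinh_add _ hs) (Real.cosh_pos _)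
    _ ≤ ‖Complex.sinh ((m + 1) * w)‖ / ‖Complex.sinh (m * w)‖ :=
        div_le_div₀ (norm_nonneg _) h_num h_den_pos h_den
end

section
/- For all sufficiently large m ∈ ℕ: if |z| ≥ exp(log(m)/(2m)), then |F_m(z)| > 1, where F_m(z) = (z^{m+1} - z^{-m-1})/(z^m - z^{-m}). Consequently, if also |w| ≥ exp(log(n)/(2n)) with n large, then |F_m(z)·F_n(w)| > 1. -/
/-! With `r = ‖z‖` and `s = r ^ m`, the triangle inequality gives
`‖Fm m z‖ ≥ (s r - (s r)⁻¹) / (s + s⁻¹)`, which exceeds `1` as soon as `s² (r - 1) > 2`.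
The hypothesis `‖z‖ ≥ exp (log m / (2m))` gives `s² ≥ m` and `r - 1 ≥ log m / (2m)`, so
`s² (r - 1) ≥ log m / 2`, and this is `> 2` once `m > e⁴`. -/

open Real

lemma one_lt_norm_sub_div_sub {𝕜 : Type*} [NormedDivisionRing 𝕜] {a b c d : 𝕜}
    (hcd : ‖d‖ < ‖c‖) (h : ‖c‖ + ‖d‖ < ‖a‖ - ‖b‖) : 1 < ‖(a - b) / (c - d)‖ := by
  have hden : 0 < ‖c - d‖ := (sub_pos.2 hcd).trans_le (norm_sub_norm_le c d)
  rw [norm_div, one_lt_div hden]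
  calc ‖c - d‖ ≤ ‖c‖ + ‖d‖ := norm_sub_le c d
    _ < ‖a‖ - ‖b‖ := h
    _ ≤ ‖a - b‖ := norm_sub_norm_le a b

lemma add_inv_lt_mul_sub_inv {r s : ℝ} (hr : 1 < r) (hs : 0 < s) (h : 2 < s ^ 2 * (r - 1)) :
    s + s⁻¹ < s * r - (s * r)⁻¹ := by
  have hsr : 0 < s * r := by positivity
  have key : s * r - (s * r)⁻¹ - (s + s⁻¹) = (s ^ 2 * r * (r - 1) - (r + 1)) / (s * r) := by
    field_simp
    ring
  have hnum : r + 1 < s ^ 2 * r * (r - 1) := by nlinarith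
  rw [← sub_pos, key]
  exact div_pos (sub_pos.2 hnum) hsr

lemma one_lt_norm_Fm_of_two_lt {m : ℕ} {z : ℂ} (hm : m ≠ 0)
    (h : 2 < ‖z‖ ^ (2 * m) * (‖z‖ - 1)) : 1 < ‖Fm m z‖ := by
  set r := ‖z‖
  have hr : 1 < r := by
    by_contra! hr
    nlinarith [mul_nonpos_of_nonneg_of_nonpos (pow_nonneg (norm_nonneg z) (2 * m))
      (sub_nonpos.2 hr)]
  have hs : 1 < r ^ m := one_lt_pow₀ hr hm
  have hneg : ∀ k : ℕ, ‖z ^ (-(k : ℤ))‖ = (r ^ k)⁻¹ := fun k => by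
    rw [norm_zpow, zpow_neg, zpow_natCast]
  apply one_lt_norm_sub_div_sub
  · rw [norm_pow, hneg]
    exact (inv_lt_one_of_one_lt₀ hs).trans hs
  · rw [norm_pow, norm_pow, hneg, show (-(m + 1) : ℤ) = -((m + 1 : ℕ) : ℤ) by push_cast; rfl,
      hneg, pow_succ]
    exact add_inv_lt_mul_sub_inv hr (by positivity) (by rwa [← pow_mul, mul_comm m 2])

lemma le_pow_of_exp_log_div_le {x r : ℝ} {n : ℕ} (hx : 0 < x) (hn : n ≠ 0)
    (h : exp (log x / n) ≤ r) : x ≤ r ^ n := by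
  calc x = exp (log x / n) ^ n := by
        rw [← exp_nat_mul, mul_div_cancel₀ _ (Nat.cast_ne_zero.2 hn), exp_log hx]
    _ ≤ r ^ n := pow_le_pow_left₀ (exp_pos _).le h n

lemma four_lt_log {x : ℝ} (hx : 55 ≤ x) : 4 < log x := by
  have he : exp 4 < 55 := by
    calc exp 4 = exp 1 ^ 4 := by rw [← exp_nat_mul]; norm_num
      _ < 2.7182818286 ^ 4 := by gcongr; exact exp_one_lt_d9
      _ < 55 := by norm_num
  exact (lt_log_iff_exp_lt (by linarith)).2 (he.trans_le hx)

lemma two_lt_pow_mul_sub_one {m : ℕ} {r : ℝ} (hm : 55 ≤ m)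
    (h : exp (log m / (2 * m)) ≤ r) : 2 < r ^ (2 * m) * (r - 1) := by
  have hm' : (55 : ℝ) ≤ m := by exact_mod_cast hm
  have hlog := four_lt_log hm'
  have hpow : (m : ℝ) ≤ r ^ (2 * m) :=
    le_pow_of_exp_log_div_le (by linarith) (by omega) (by push_cast; exact h)
  have hsub : log m / (2 * m) ≤ r - 1 := by
    linarith [add_one_le_exp (log m / (2 * m))]
  have hq : 0 ≤ log m / (2 * m) := div_nonneg (by linarith) (by positivity)
  calc (2 : ℝ) < log m / 2 := by linarith
    _ = m * (log m / (2 * m)) := by field_simp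
    _ ≤ r ^ (2 * m) * (r - 1) := mul_le_mul hpow hsub hq ((Nat.cast_nonneg m).trans hpow)

theorem Fm_product_gt_one :
    ∃ M : ℕ, (∀ m : ℕ, M ≤ m → ∀ z : ℂ,
        Real.exp (Real.log m / (2 * m)) ≤ ‖z‖ →
        1 < ‖Fm m z‖) ∧
      (∀ m n : ℕ, M ≤ m → M ≤ n → ∀ z w : ℂ,
        Real.exp (Real.log m / (2 * m)) ≤ ‖z‖ →
        Real.exp (Real.log n / (2 * n)) ≤ ‖w‖ →
        1 < ‖Fm m z * Fm n w‖) := by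
  have hF : ∀ m : ℕ, 55 ≤ m → ∀ z : ℂ, exp (log m / (2 * m)) ≤ ‖z‖ → 1 < ‖Fm m z‖ :=
    fun m hm z hz => one_lt_norm_Fm_of_two_lt (by omega) (two_lt_pow_mul_sub_one hm hz)
  refine ⟨55, hF, fun m n hm hn z w hz hw => ?_⟩
  rw [norm_mul]
  exact one_lt_mul_of_lt_of_le (hF m hm z hz) (hF n hn w hw).le
end
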